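/- For all nonnegative integers l, m, n: \mathscr{B}_m^{(-l)}(n) = \sum_{j=0}^{\min(l,m)} n! (j!)^2 \binom{j+n}{n} {l+1 choose_2 j+1} {m+1 choose_2 j+1}, where \mathscr{B}_m^{(-l)}(n) = \sum_{j=0}^{n} [n choose_1 j] B_m^{(-l-j)}(n). -/

import Mathlib

open PowerSeries Finset

/-- Unsigned Stirling numbers of the first kind. -/
def stirling1 : ℕ → ℕ → ℕ
  | 0, 0 => 1
  | 0, _ + 1 => 0
  | _ + 1, 0 => 0
  | n + 1, m + 1 => stirling1 n m + n * stirling1 n (m + 1)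

/-- Stirling numbers of the second kind. -/
def stirling2 : ℕ → ℕ → ℕ
  | 0, 0 => 1
  | 0, _ + 1 => 0
  | _ + 1, 0 => 0
  | n + 1, m + 1 => stirling2 n m + (m + 1) * stirling2 n (m + 1)

/-- e^t as a formal power series over ℚ. -/
noncomputable def expQ : PowerSeries ℚ := PowerSeries.exp ℚ

/-- e^{-t} as a formal power series over ℚ. -/
noncomputable def expNegQ : PowerSeries ℚ := rescale (-1) expQ

/-- The formal power series Li_k(1-e^{-t})/(1-e^{-t}) = ∑_{m≥0} (m+1)^{-k} (1-e^{-t})^m,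
  defined coefficientwise (the tail vanishes since (1-e^{-t})^m has order m). -/
noncomputable def liEGF (k : ℤ) : PowerSeries ℚ :=
  PowerSeries.mk fun j =>
    ∑ m ∈ range (j + 1), ((m : ℚ) + 1) ^ (-k) * coeff j ((1 - expNegQ) ^ m)

/-- EGF of the poly-Bernoulli polynomials: e^{-xt} Li_k(1-e^{-t})/(1-e^{-t}). -/
noncomputable def pbEGF (k : ℤ) (x : ℚ) : PowerSeries ℚ := rescale (-x) expQ * liEGF k

/-- Poly-Bernoulli polynomial value B_m^{(k)}(x). -/
noncomputable def pbPoly (k : ℤ) (x : ℚ) (m : ℕ) : ℚ := m.factorial * coeff m (pbEGF k x)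

/-- Poly-Bernoulli number B_m^{(k)}. -/
noncomputable def pbB (k : ℤ) (m : ℕ) : ℚ := pbPoly k 0 m

/-- Poly-Bernoulli number C_m^{(k)}. -/
noncomputable def pbC (k : ℤ) (m : ℕ) : ℚ := pbPoly k 1 m

/-- 𝓑_m^{(-l)}(n) = ∑_{j=0}^n [n j] B_m^{(-l-j)}(n). -/
noncomputable def scrB (l m n : ℕ) : ℚ :=
  ∑ j ∈ range (n + 1), (stirling1 n j : ℚ) * pbPoly (-(l : ℤ) - j) n m

/-! Since `∑ⱼ [n j] xʲ = x(x+1)⋯(x+n-1)`, the exponential generating function of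
`m ↦ scrB l m n` is `e^{-nt} f(1 - e^{-t})` with `f = ∑ₚ (p+1)ˡ (p+1)⋯(p+n) Xᵖ`. Expanding
`(p+1)ˡ = ∑ᵢ {l+1, i+1} p(p-1)⋯(p-i+1)` gives `f = ∑ᵢ {l+1, i+1} (i+n)! Xⁱ / (1-X)^{i+n+1}`, and
the substitution `X = 1 - e^{-t}` turns the `i`-th term into `(i+n)! (eᵗ-1)ⁱ eᵗ`. This is
`(i+n)!/(i+1)` times the derivative of `(eᵗ-1)^{i+1}`, the exponential generating function of
`(i+1)! {m, i+1}`, so its `m`-th coefficient is `(i+n)! i! {m+1, i+1} / m!`. -/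

theorem stirling1_eq_stirlingFirst : stirling1 = Nat.stirlingFirst := by
  funext n k
  induction n generalizing k with
  | zero => cases k <;> rfl
  | succ n ih =>
    cases k with
    | zero => rfl
    | succ k => rw [stirling1, Nat.stirlingFirst_succ_succ, ih, ih, add_comm]

theorem stirling2_eq_stirlingSecond : stirling2 = Nat.stirlingSecond := by
  funext n k
  induction n generalizing k with
  | zero => cases k <;> rfl
  | succ n ih =>
    cases k with
    | zero => rfl
    | succ k => rw [stirling2, Nat.stirlingSecond_succ_succ, ih, ih, add_comm]

namespace Nat

theorem sum_stirlingFirst_mul_pow {R : Type*} [CommSemiring R] (n : ℕ) (x : R) :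
    ∑ k ∈ range (n + 1), (stirlingFirst n k : R) * x ^ k = (ascPochhammer R n).eval x := by
  induction n with
  | zero => simp
  | succ n ih =>
    have hB : ∑ k ∈ range (n + 1), (stirlingFirst n k : R) * x ^ k =
        ∑ k ∈ range (n + 1), (stirlingFirst n (k + 1) : R) * x ^ (k + 1) + stirlingFirst n 0 := by
      rw [sum_range_succ' _ n, sum_range_succ _ n, stirlingFirst_eq_zero_of_lt (lt_add_one n)]
      simp
    have hn0 : (n : R) * stirlingFirst n 0 = 0 := by cases n <;> simp
    rw [sum_range_succ', ascPochhammer_succ_eval, ← ih]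
    simp only [stirlingFirst_succ_succ, stirlingFirst_succ_zero, cast_add, cast_mul, cast_zero,
      zero_mul, add_zero, add_mul, sum_add_distrib]
    calc _ = (n : R) * ∑ k ∈ range (n + 1), (stirlingFirst n (k + 1) : R) * x ^ (k + 1) +
          x * ∑ k ∈ range (n + 1), (stirlingFirst n k : R) * x ^ k := by
          simp only [mul_sum, ← sum_add_distrib]
          exact sum_congr rfl fun k _ => by ring
      _ = (n : R) * (∑ k ∈ range (n + 1), (stirlingFirst n (k + 1) : R) * x ^ (k + 1) +
          stirlingFirst n 0) + x * ∑ k ∈ range (n + 1), (stirlingFirst n k : R) * x ^ k := by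
          rw [mul_add (n : R), hn0, add_zero]
      _ = _ := by rw [← hB]; ring

theorem add_one_pow_eq_sum_stirlingSecond_mul_descPochhammer {R : Type*} [CommRing R]
    (l : ℕ) (x : R) :
    (x + 1) ^ l =
      ∑ j ∈ range (l + 1), (stirlingSecond (l + 1) (j + 1) : R) * (descPochhammer R j).eval x := by
  induction l with
  | zero => simp [stirlingSecond_self]
  | succ l ih =>
    have hstep (j : ℕ) : (x + 1) * (descPochhammer R j).eval x =
        (descPochhammer R (j + 1)).eval x + (j + 1) * (descPochhammer R j).eval x := by
      rw [descPochhammer_succ_eval]; ring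
    have hlast : stirlingSecond (l + 1) (l + 1 + 1) = 0 :=
      stirlingSecond_eq_zero_of_lt (lt_add_one _)
    calc (x + 1) ^ (l + 1)
        = ∑ j ∈ range (l + 1), (stirlingSecond (l + 1) (j + 1) : R) *
              (descPochhammer R (j + 1)).eval x +
            ∑ j ∈ range (l + 1), (j + 1) * (stirlingSecond (l + 1) (j + 1) : R) *
              (descPochhammer R j).eval x := by
          rw [pow_succ, ih, sum_mul, ← sum_add_distrib]
          exact sum_congr rfl fun j _ => by
            linear_combination (stirlingSecond (l + 1) (j + 1) : R) * hstep j
      _ = ∑ j ∈ range (l + 2), (stirlingSecond (l + 1) j : R) * (descPochhammer R j).eval x +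
            ∑ j ∈ range (l + 2), (j + 1) * (stirlingSecond (l + 1) (j + 1) : R) *
              (descPochhammer R j).eval x := by
          rw [sum_range_succ' _ (l + 1), sum_range_succ _ (l + 1), hlast]
          simp
      _ = _ := by
          rw [← sum_add_distrib]
          refine sum_congr rfl fun j _ => ?_
          rw [stirlingSecond_succ_succ (l + 1) j]
          push_cast; ring

theorem descFactorial_mul_ascFactorial {i p : ℕ} (h : i ≤ p) (n : ℕ) :
    p.descFactorial i * (p + 1).ascFactorial n = (i + n).factorial * (p + n).choose (i + n) := by
  apply Nat.eq_of_mul_eq_mul_left (factorial_pos (p - i))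
  have hsub : p + n - (i + n) = p - i := by omega
  calc (p - i).factorial * (p.descFactorial i * (p + 1).ascFactorial n)
      = (p + n).factorial := by
        rw [← mul_assoc, factorial_mul_descFactorial h, factorial_mul_ascFactorial]
    _ = _ := by
        rw [← choose_mul_factorial_mul_factorial (show i + n ≤ p + n by omega), hsub]
        ring

end Nat

theorem mk_add_one_pow_mul_ascPochhammer {R : Type*} [CommRing R] (l n : ℕ) :
    (mk fun p => ((p : R) + 1) ^ l * (ascPochhammer R n).eval ((p : R) + 1)) =
      ∑ i ∈ range (l + 1), ((Nat.stirlingSecond (l + 1) (i + 1) * (i + n).factorial : ℕ) : R) •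
        (X ^ i * (invOneSubPow R (i + n + 1)).val) := by
  ext p
  simp only [coeff_mk, map_sum, coeff_smul, coeff_X_pow_mul',
    invOneSubPow_val_succ_eq_mk_add_choose,
    Nat.add_one_pow_eq_sum_stirlingSecond_mul_descPochhammer, sum_mul]
  refine sum_congr rfl fun i _ => ?_
  have hasc : (ascPochhammer R n).eval ((p : R) + 1) = ((p + 1).ascFactorial n : ℕ) := by
    rw [← ascPochhammer_nat_eq_ascFactorial, ascPochhammer_eval_cast]; push_cast; rfl
  rw [mul_assoc, hasc, descPochhammer_eval_eq_descFactorial]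
  split_ifs with h
  · rw [← Nat.cast_mul, Nat.descFactorial_mul_ascFactorial h, smul_eq_mul,
      show i + n + (p - i) = p + n by omega]
    push_cast; ring
  · rw [Nat.descFactorial_eq_zero_iff_lt.2 (by omega)]
    simp

theorem expNegQ_mul_expQ : expNegQ * expQ = 1 := by
  simpa [expNegQ, expQ] using exp_mul_exp_eq_exp_add (A := ℚ) (-1) 1

theorem rescale_neg_natCast_expQ (n : ℕ) : rescale (-(n : ℚ)) expQ = expNegQ ^ n := by
  rw [expNegQ, ← map_pow, expQ, exp_pow_eq_rescale_exp, rescale_rescale, mul_neg_one]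

theorem constantCoeff_one_sub_expNegQ : constantCoeff (1 - expNegQ) = 0 := by
  rw [map_sub, map_one, expNegQ, ← coeff_zero_eq_constantCoeff_apply, coeff_rescale]
  simp [expQ]

theorem hasSubst_one_sub_expNegQ : HasSubst (1 - expNegQ) :=
  HasSubst.of_constantCoeff_zero' constantCoeff_one_sub_expNegQ

theorem coeff_one_sub_expNegQ_pow_of_lt {j p : ℕ} (h : j < p) :
    coeff j ((1 - expNegQ) ^ p) = 0 :=
  X_pow_dvd_iff.1 (pow_dvd_pow_of_dvd (X_dvd_iff.2 constantCoeff_one_sub_expNegQ) p) j h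

theorem liEGF_eq_subst (k : ℤ) :
    liEGF k = (mk fun p => ((p : ℚ) + 1) ^ (-k)).subst (1 - expNegQ) := by
  ext j
  rw [liEGF, coeff_mk, coeff_subst' hasSubst_one_sub_expNegQ,
    finsum_eq_sum_of_support_subset _ (s := range (j + 1))]
  · simp
  · intro p hp
    simp only [Function.mem_support] at hp
    simp only [coe_range, Set.mem_Iio]
    by_contra h
    exact hp (by rw [coeff_one_sub_expNegQ_pow_of_lt (by omega), smul_zero])

theorem subst_invOneSubPow (d : ℕ) :
    (invOneSubPow ℚ d).val.subst (1 - expNegQ) = expQ ^ d := by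
  have h := congrArg (substAlgHom hasSubst_one_sub_expNegQ) (invOneSubPow ℚ d).val_inv
  rw [invOneSubPow_inv_eq_one_sub_pow, map_mul, map_pow, map_sub, map_one, substAlgHom_X,
    sub_sub_cancel, coe_substAlgHom] at h
  exact left_inv_eq_right_inv h (by rw [← mul_pow, expNegQ_mul_expQ, one_pow])

theorem derivative_expQ_sub_one_pow (j : ℕ) :
    d⁄dX ℚ ((expQ - 1) ^ (j + 1)) = (j + 1 : ℚ) • ((expQ - 1) ^ j * expQ) := by
  rw [Derivation.leibniz_pow, map_sub, derivative_one, sub_zero, expQ, derivative_exp,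
    Nat.add_sub_cancel, smul_eq_mul, ← Nat.cast_smul_eq_nsmul ℚ]
  push_cast; rfl

theorem coeff_succ_expQ_sub_one_pow_succ (j m : ℕ) :
    coeff (m + 1) ((expQ - 1) ^ (j + 1)) * (m + 1 : ℚ) =
      (j + 1 : ℚ) * coeff m ((expQ - 1) ^ j * expQ) := by
  rw [← coeff_derivative, derivative_expQ_sub_one_pow, coeff_smul, smul_eq_mul]

theorem factorial_mul_coeff_expQ_sub_one_pow (j m : ℕ) :
    (m.factorial : ℚ) * coeff m ((expQ - 1) ^ j) = j.factorial * Nat.stirlingSecond m j := by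
  induction m generalizing j with
  | zero =>
    have h0 : constantCoeff (expQ - 1) = 0 := by simp [expQ]
    cases j <;> simp [h0]
  | succ m ih =>
    cases j with
    | zero => simp [coeff_one]
    | succ j =>
      have hd := coeff_succ_expQ_sub_one_pow_succ j m
      rw [show (expQ - 1) ^ j * expQ = (expQ - 1) ^ (j + 1) + (expQ - 1) ^ j by ring,
        map_add] at hd
      have ih1 := ih (j + 1)
      have ih0 := ih j
      rw [Nat.stirlingSecond_succ_succ, Nat.factorial_succ, Nat.factorial_succ j]
      rw [Nat.factorial_succ j] at ih1
      push_cast at ih1 ⊢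
      linear_combination (m.factorial : ℚ) * hd + (j + 1) * ih1 + (j + 1) * ih0

theorem factorial_mul_coeff_expQ_sub_one_pow_mul_expQ (j m : ℕ) :
    (m.factorial : ℚ) * coeff m ((expQ - 1) ^ j * expQ) =
      j.factorial * Nat.stirlingSecond (m + 1) (j + 1) := by
  have hd := coeff_succ_expQ_sub_one_pow_succ j m
  have hc := factorial_mul_coeff_expQ_sub_one_pow (j + 1) (m + 1)
  rw [Nat.factorial_succ, Nat.factorial_succ j] at hc
  push_cast at hc
  apply mul_left_cancel₀ (show (j + 1 : ℚ) ≠ 0 by positivity)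
  linear_combination hc - (m.factorial : ℚ) * hd

theorem scrB_eq_factorial_mul_coeff (l m n : ℕ) :
    scrB l m n = m.factorial * coeff m (rescale (-(n : ℚ)) expQ *
      (mk fun p => ((p : ℚ) + 1) ^ l * (ascPochhammer ℚ n).eval ((p : ℚ) + 1)).subst
        (1 - expNegQ)) := by
  have hseq : (mk fun p => ((p : ℚ) + 1) ^ l * (ascPochhammer ℚ n).eval ((p : ℚ) + 1)) =
      ∑ j ∈ range (n + 1),
        (stirling1 n j : ℚ) • mk fun p => ((p : ℚ) + 1) ^ (-(-(l : ℤ) - j)) := by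
    ext p
    simp only [coeff_mk, map_sum, coeff_smul, smul_eq_mul, stirling1_eq_stirlingFirst,
      ← Nat.sum_stirlingFirst_mul_pow, mul_sum]
    refine sum_congr rfl fun j _ => ?_
    rw [show -(-(l : ℤ) - j) = ((l + j : ℕ) : ℤ) by push_cast; ring, zpow_natCast, pow_add]
    ring
  rw [hseq, ← coe_substAlgHom hasSubst_one_sub_expNegQ, map_sum, mul_sum, map_sum, mul_sum, scrB]
  refine sum_congr rfl fun j _ => ?_
  rw [pbPoly, pbEGF, liEGF_eq_subst, map_smul, mul_smul_comm, coeff_smul, coe_substAlgHom,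
    smul_eq_mul]
  ring

theorem rescale_neg_expQ_mul_subst_X_pow_mul_invOneSubPow (n i : ℕ) :
    rescale (-(n : ℚ)) expQ * (X ^ i * (invOneSubPow ℚ (i + n + 1)).val).subst (1 - expNegQ) =
      (expQ - 1) ^ i * expQ := by
  rw [← coe_substAlgHom hasSubst_one_sub_expNegQ, map_mul, map_pow, substAlgHom_X,
    coe_substAlgHom, subst_invOneSubPow, rescale_neg_natCast_expQ]
  have hu : (1 - expNegQ) * expQ = expQ - 1 := by rw [sub_mul, one_mul, expNegQ_mul_expQ]
  calc _ = ((1 - expNegQ) * expQ) ^ i * (expNegQ * expQ) ^ n * expQ := by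
        rw [mul_pow, mul_pow]; ring
    _ = _ := by rw [hu, expNegQ_mul_expQ]; ring

theorem scrB_eq_sum_range (l m n : ℕ) :
    scrB l m n = ∑ i ∈ range (l + 1), (i.factorial * (i + n).factorial *
      Nat.stirlingSecond (l + 1) (i + 1) * Nat.stirlingSecond (m + 1) (i + 1) : ℚ) := by
  rw [scrB_eq_factorial_mul_coeff, mk_add_one_pow_mul_ascPochhammer,
    ← coe_substAlgHom hasSubst_one_sub_expNegQ, map_sum, mul_sum, map_sum, mul_sum]
  refine sum_congr rfl fun i _ => ?_
  rw [map_smul, mul_smul_comm, coeff_smul, coe_substAlgHom,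
    rescale_neg_expQ_mul_subst_X_pow_mul_invOneSubPow, smul_eq_mul, mul_left_comm,
    factorial_mul_coeff_expQ_sub_one_pow_mul_expQ]
  push_cast
  ring

theorem scrB_eq_sum_stirling2 (l m n : ℕ) :
    scrB l m n =
      ∑ j ∈ range (min l m + 1),
        (n.factorial : ℚ) * (j.factorial : ℚ) ^ 2 * ((j + n).choose n : ℚ) *
          (stirling2 (l + 1) (j + 1) : ℚ) * (stirling2 (m + 1) (j + 1) : ℚ) := by
  rw [scrB_eq_sum_range, stirling2_eq_stirlingSecond]
  symm
  apply sum_subset_zero_on_sdiff (range_subset_range.2 (by omega))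
  · intro i hi
    simp only [mem_sdiff, mem_range] at hi
    rw [Nat.stirlingSecond_eq_zero_of_lt (by omega : m + 1 < i + 1)]
    simp
  · intro i _
    rw [← Nat.add_choose_mul_factorial_mul_factorial i n]
    push_cast
    ring
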